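/- arXiv:1707.08409 — 2 statements merged into one kernel-verified Lean document; each statement's English description precedes it below -/
import Mathlib

section
/- The offloading probability, viewed as a set function f(C) = Σ_k w_k Σ_f q_{f|k} (1 - Π_{(m,f) ∈ C} (1 - a_{k,m})) over sets C of (user, file) caching actions where the product only ranges over pairs with second coordinate f, is monotone nondecreasing and submodular on subsets of {1,...,K} × {1,...,F}. -/
/-!
Each summand `C ↦ 1 - ∏_{(m, f) ∈ C} (1 - a_{k,m})` is a probabilistic coverage function of the
users caching `f`: adding a user `m` to a cache set `T` increases it by `a_{k,m} ∏_{T} (1 - a_{k,·})`,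
which is nonnegative and shrinks as `T` grows. Monotonicity and diminishing returns then pass
through the restriction to the pairs with second coordinate `f` and through nonnegative linear
combinations.
-/

open Finset

def IsSubmodular {α : Type*} [DecidableEq α] (g : Finset α → ℝ) : Prop :=
  ∀ A B : Finset α, ∀ x, A ⊆ B → x ∉ B → g (insert x B) - g B ≤ g (insert x A) - g A

namespace IsSubmodular

variable {α : Type*} [DecidableEq α]

theorem const_mul {g : Finset α → ℝ} (hg : IsSubmodular g) {c : ℝ} (hc : 0 ≤ c) :
    IsSubmodular fun C => c * g C := by
  intro A B x hAB hxB
  simp only [← mul_sub]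
  exact mul_le_mul_of_nonneg_left (hg A B x hAB hxB) hc

theorem finsetSum {ι : Type*} {s : Finset ι} {g : ι → Finset α → ℝ}
    (hg : ∀ i ∈ s, IsSubmodular (g i)) : IsSubmodular fun C => ∑ i ∈ s, g i C := by
  intro A B x hAB hxB
  simp only [← sum_sub_distrib]
  exact sum_le_sum fun i hi => hg i hi A B x hAB hxB

end IsSubmodular

theorem antitone_prod_one_sub {ι : Type*} {b : ι → ℝ} (hb0 : ∀ i, 0 ≤ b i) (hb1 : ∀ i, b i ≤ 1) :
    Antitone fun T : Finset ι => ∏ i ∈ T, (1 - b i) :=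
  prod_anti_set_of_le_one (fun i => sub_nonneg.2 (hb1 i)) (fun i => sub_le_self _ (hb0 i))

section Coverage

variable {ι : Type*}

/-- The probability that at least one `i ∈ T` succeeds, when each `i` succeeds independently
with probability `b i`. -/
def coverageProb (b : ι → ℝ) (T : Finset ι) : ℝ :=
  1 - ∏ i ∈ T, (1 - b i)

variable {b : ι → ℝ}

theorem coverageProb_monotone (hb0 : ∀ i, 0 ≤ b i) (hb1 : ∀ i, b i ≤ 1) :
    Monotone (coverageProb b) :=
  fun _ _ hST => sub_le_sub_left (antitone_prod_one_sub hb0 hb1 hST) 1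

variable [DecidableEq ι]

theorem coverageProb_insert_sub {T : Finset ι} {i : ι} (hi : i ∉ T) :
    coverageProb b (insert i T) - coverageProb b T = b i * ∏ j ∈ T, (1 - b j) := by
  rw [coverageProb, coverageProb, prod_insert hi]
  ring

theorem coverageProb_isSubmodular (hb0 : ∀ i, 0 ≤ b i) (hb1 : ∀ i, b i ≤ 1) :
    IsSubmodular (coverageProb b) := by
  intro A B i hAB hiB
  rw [coverageProb_insert_sub hiB, coverageProb_insert_sub fun hiA => hiB (hAB hiA)]
  exact mul_le_mul_of_nonneg_left (antitone_prod_one_sub hb0 hb1 hAB) (hb0 i)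

end Coverage

section LeftSlice

variable {ι κ : Type*} [Fintype ι] [DecidableEq ι] [DecidableEq κ]

def leftSlice (C : Finset (ι × κ)) (f : κ) : Finset ι :=
  univ.filter fun m => (m, f) ∈ C

theorem monotone_leftSlice (f : κ) : Monotone fun C : Finset (ι × κ) => leftSlice C f :=
  fun _ _ hCD => monotone_filter_right univ fun _ _ hm => hCD hm

theorem leftSlice_insert_self (C : Finset (ι × κ)) (x : ι × κ) :
    leftSlice (insert x C) x.2 = insert x.1 (leftSlice C x.2) := by
  ext m
  simp [leftSlice, Prod.ext_iff]

theorem leftSlice_insert_of_ne (C : Finset (ι × κ)) {x : ι × κ} {f : κ} (hf : x.2 ≠ f) :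
    leftSlice (insert x C) f = leftSlice C f := by
  ext m
  simp only [leftSlice, mem_filter, mem_univ, true_and, mem_insert, Prod.ext_iff]
  exact or_iff_right fun h => hf (h.2 ▸ rfl)

theorem fst_notMem_leftSlice {C : Finset (ι × κ)} {x : ι × κ} (hx : x ∉ C) :
    x.1 ∉ leftSlice C x.2 := by
  simpa [leftSlice] using hx

theorem IsSubmodular.comp_leftSlice {g : Finset ι → ℝ} (hg : IsSubmodular g) (f : κ) :
    IsSubmodular fun C : Finset (ι × κ) => g (leftSlice C f) := by
  intro A B x hAB hxB
  by_cases hf : x.2 = f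
  · subst hf
    simp only [leftSlice_insert_self]
    exact hg _ _ _ (monotone_leftSlice x.2 hAB) (fst_notMem_leftSlice hxB)
  · simp only [leftSlice_insert_of_ne _ hf, sub_self, le_refl]

end LeftSlice

/-- The offloading probability viewed as a set function over sets of
(user, file) caching actions is monotone nondecreasing and submodular. -/
theorem stmt_8 (K F : ℕ)
    (w : Fin K → ℝ) (q : Fin K → Fin F → ℝ) (a : Fin K → Fin K → ℝ)
    (hw : ∀ k, 0 ≤ w k) (hq : ∀ k f, 0 ≤ q k f)
    (ha : ∀ k m, a k m ∈ Set.Icc (0 : ℝ) 1)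
    (off : Finset (Fin K × Fin F) → ℝ)
    (hoff : ∀ C, off C = ∑ k, w k * ∑ f, q k f *
      (1 - ∏ m ∈ Finset.univ.filter (fun m => (m, f) ∈ C), (1 - a k m))) :
    (∀ A B : Finset (Fin K × Fin F), A ⊆ B → off A ≤ off B) ∧
    (∀ A B : Finset (Fin K × Fin F), ∀ x, A ⊆ B → x ∉ B →
      off (insert x B) - off B ≤ off (insert x A) - off A) := by
  have ha0 k m : 0 ≤ a k m := (ha k m).1
  have ha1 k m : a k m ≤ 1 := (ha k m).2
  have hoff' : off = fun C => ∑ k, w k * ∑ f, q k f * coverageProb (a k) (leftSlice C f) :=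
    funext hoff
  have hmono : Monotone off := by
    rw [hoff']
    refine Monotone.finsetSum fun k _ => Monotone.const_mul ?_ (hw k)
    refine Monotone.finsetSum fun f _ => Monotone.const_mul ?_ (hq k f)
    exact (coverageProb_monotone (ha0 k) (ha1 k)).comp (monotone_leftSlice f)
  have hsub : IsSubmodular off := by
    rw [hoff']
    refine IsSubmodular.finsetSum fun k _ => IsSubmodular.const_mul ?_ (hw k)
    refine IsSubmodular.finsetSum fun f _ => IsSubmodular.const_mul ?_ (hq k f)
    exact (coverageProb_isSubmodular (ha0 k) (ha1 k)).comp_leftSlice f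
  exact ⟨hmono, hsub⟩
end

section
/- A per-block local optimum of a monotone submodular function over a partition matroid achieves at least half the optimum: let f: 2^S → R be monotone nondecreasing, submodular, with f(∅) ≥ 0, where S = S_1 ∪ ... ∪ S_K is a partition, and feasible sets are C = C_1 ∪ ... ∪ C_K with C_k ⊆ S_k, |C_k| ≤ M. If C^L is feasible and for every k, replacing C^L_k by any other feasible block does not increase f (holding the other blocks fixed), then f(C^L) ≥ (1/2) f(C*) for every feasible C*. -/
/-!
Adding the whole optimum `C*` to `C^L` gains at most the sum over `k` of the
gains `f (C^L ∪ C*_k) - f C^L`. By submodularity each such gain is at most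
`f (C^L \ C^L_k ∪ C*_k) - f (C^L \ C^L_k)`, hence by local optimality at most the loss
`f C^L - f (C^L \ C^L_k)` of deleting block `k`. Removing the blocks of `C^L` one after another
and using submodularity once more, these losses sum to at most `f C^L - f ∅ ≤ f C^L`.
So `f C* ≤ f (C^L ∪ C*) ≤ 2 f C^L`.
-/

open Finset

section

variable {α : Type*} [DecidableEq α] {f : Finset α → ℝ}

theorem antitone_marginal (hmono : Monotone f)
    (hsub : ∀ A B : Finset α, ∀ x, A ⊆ B → x ∉ B →
      f (insert x B) - f B ≤ f (insert x A) - f A)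
    (X : Finset α) : Antitone fun A => f (A ∪ X) - f A := by
  induction X using Finset.induction_on with
  | empty => intro A B _; simp
  | @insert x X hxX ih =>
    intro A B hAB
    have hX := ih hAB
    simp only [union_insert] at hX ⊢
    by_cases hxB : x ∈ B
    · rw [insert_eq_of_mem (mem_union_left X hxB)]
      have := hmono (subset_insert x (A ∪ X))
      linarith
    · have := hsub (A ∪ X) (B ∪ X) x (union_subset_union_left hAB) (by simp [hxB, hxX])
      linarith

variable (hf : ∀ X, Antitone fun A => f (A ∪ X) - f A)
include hf

theorem marginal_biUnion_le_sum {ι : Type*} [DecidableEq ι] (s : Finset ι)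
    (P : ι → Finset α) (T : Finset α) :
    f (T ∪ s.biUnion P) - f T ≤ ∑ i ∈ s, (f (T ∪ P i) - f T) := by
  induction s using Finset.induction_on with
  | empty => simp
  | @insert i s hi ih =>
    rw [biUnion_insert, sum_insert hi, ← union_assoc]
    have := hf (s.biUnion P) (subset_union_left : T ⊆ T ∪ P i)
    simp only at this
    linarith

theorem sum_sub_filter_ne_le {K : ℕ} (blk : α → Fin K) (C : Finset α) :
    ∑ k : Fin K, (f C - f (C.filter (blk · ≠ k))) ≤ f C - f ∅ := by
  set lowBlocks : ℕ → Finset α := fun j => C.filter (fun x => (blk x : ℕ) < j)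
  have hloss_le (k : Fin K) :
      f C - f (C.filter (blk · ≠ k)) ≤ f (lowBlocks (k + 1)) - f (lowBlocks k) := by
    have hprefix : lowBlocks k ⊆ C.filter (blk · ≠ k) := by
      intro a ha
      simp only [lowBlocks, mem_filter] at ha ⊢
      exact ⟨ha.1, fun h => by rw [h] at ha; omega⟩
    have hC : C.filter (blk · ≠ k) ∪ C.filter (blk · = k) = C := by
      ext a; simp only [mem_union, mem_filter]; tauto
    have hsucc : lowBlocks k ∪ C.filter (blk · = k) = lowBlocks (k + 1) := by
      ext a
      simp only [lowBlocks, mem_union, mem_filter, Fin.ext_iff]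
      by_cases ha : a ∈ C <;> simp [ha]; omega
    simpa only [hC, hsucc] using hf (C.filter (blk · = k)) hprefix
  have hlast : lowBlocks K = C := filter_true_of_mem fun x _ => (blk x).isLt
  have hfirst : lowBlocks 0 = ∅ := by simp [lowBlocks]
  calc ∑ k : Fin K, (f C - f (C.filter (blk · ≠ k)))
      ≤ ∑ k : Fin K, (f (lowBlocks (k + 1)) - f (lowBlocks k)) :=
        sum_le_sum fun k _ => hloss_le k
    _ = f C - f ∅ := by
        rw [Fin.sum_univ_eq_sum_range (fun j => f (lowBlocks (j + 1)) - f (lowBlocks j)),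
          sum_range_sub (fun j => f (lowBlocks j)), hlast, hfirst]

end

theorem stmt_12_general {α : Type*} [DecidableEq α] (K M : ℕ)
    (blk : α → Fin K)
    (f : Finset α → ℝ)
    (hmono : ∀ A B : Finset α, A ⊆ B → f A ≤ f B)
    (hsub : ∀ A B : Finset α, ∀ x, A ⊆ B → x ∉ B →
      f (insert x B) - f B ≤ f (insert x A) - f A)
    (hempty : 0 ≤ f ∅)
    (CL : Finset α)
    (hlocal : ∀ k : Fin K, ∀ D : Finset α, (∀ x ∈ D, blk x = k) → D.card ≤ M →
      f ((CL.filter (fun x => blk x ≠ k)) ∪ D) ≤ f CL)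
    (Copt : Finset α)
    (hCoptfeas : ∀ k : Fin K, (Copt.filter (fun x => blk x = k)).card ≤ M) :
    f Copt ≤ 2 * f CL := by
  have hf := antitone_marginal (fun A B => hmono A B) hsub
  set optBlock : Fin K → Finset α := fun k => Copt.filter (blk · = k)
  have hCopt : univ.biUnion optBlock = Copt := by ext a; simp [optBlock]
  have hgain_le_loss (k : Fin K) :
      f (CL ∪ optBlock k) - f CL ≤ f CL - f (CL.filter (blk · ≠ k)) := by
    have hsubmod := hf (optBlock k) (filter_subset (blk · ≠ k) CL)
    have hopt := hlocal k (optBlock k) (fun x hx => (mem_filter.mp hx).2) (hCoptfeas k)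
    simp only at hsubmod
    linarith
  have hunion := marginal_biUnion_le_sum hf univ optBlock CL
  rw [hCopt] at hunion
  have hlosses := sum_sub_filter_ne_le hf blk CL
  have hgains := sum_le_sum fun k (_ : k ∈ univ) => hgain_le_loss k
  have := hmono Copt (CL ∪ Copt) subset_union_right
  linarith

/-- A per-block local optimum of a monotone submodular function over a partition
matroid achieves at least half the optimum. -/
theorem stmt_12 {α : Type*} [Fintype α] [DecidableEq α] (K M : ℕ)
    (blk : α → Fin K)
    (f : Finset α → ℝ)
    (hmono : ∀ A B : Finset α, A ⊆ B → f A ≤ f B)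
    (hsub : ∀ A B : Finset α, ∀ x, A ⊆ B → x ∉ B →
      f (insert x B) - f B ≤ f (insert x A) - f A)
    (hempty : 0 ≤ f ∅)
    (CL : Finset α)
    (hCLfeas : ∀ k : Fin K, (CL.filter (fun x => blk x = k)).card ≤ M)
    (hlocal : ∀ k : Fin K, ∀ D : Finset α, (∀ x ∈ D, blk x = k) → D.card ≤ M →
      f ((CL.filter (fun x => blk x ≠ k)) ∪ D) ≤ f CL)
    (Copt : Finset α)
    (hCoptfeas : ∀ k : Fin K, (Copt.filter (fun x => blk x = k)).card ≤ M) :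
    f Copt ≤ 2 * f CL :=
  stmt_12_general K M blk f hmono hsub hempty CL hlocal Copt hCoptfeas
end
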